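/- arXiv:2604.17276 — 4 statements merged into one kernel-verified Lean document; each statement's English description precedes it below -/
import Mathlib

section
/- Let X and Y be nonempty closed convex subsets of a real Hilbert space H with X ∩ Y ≠ ∅. Then the fixed-point set of the composition proj_Y ∘ proj_X equals X ∩ Y. -/
open RealInnerProductSpace

/-- `P` is the metric (orthogonal) projection onto `X`: it maps into `X`
and satisfies the variational characterization. -/
def IsProjOn {H : Type*} [NormedAddCommGroup H] [InnerProductSpace ℝ H]
    (X : Set H) (P : H → H) : Prop :=
  ∀ z, P z ∈ X ∧ ∀ w ∈ X, ⟪z - P z, w - P z⟫ ≤ 0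

/-! If `z ∈ Fix(P_Y ∘ P_X)` and `u = P_X z`, then for any `p ∈ X ∩ Y` the variational
inequalities of both projections give `⟪z - u, p - u⟫ ≤ 0` and `⟪u - z, p - z⟫ ≤ 0`;
their sum is `‖z - u‖² ≤ 0`, so `z = u ∈ X`, and `z = P_Y u ∈ Y`. -/

section

variable {H : Type*} [NormedAddCommGroup H] [InnerProductSpace ℝ H]

theorem eq_of_inner_sub_nonpos_of_inner_sub_nonpos {z u p : H}
    (hu : ⟪z - u, p - u⟫ ≤ 0) (hz : ⟪u - z, p - z⟫ ≤ 0) : z = u := by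
  have hsum : ⟪z - u, p - u⟫ + ⟪u - z, p - z⟫ = ⟪z - u, z - u⟫ := by
    rw [← neg_sub z u, inner_neg_left, ← sub_eq_add_neg, ← inner_sub_right,
      sub_sub_sub_cancel_left]
  exact sub_eq_zero.mp (real_inner_self_nonpos.mp (hsum ▸ add_nonpos hu hz))

namespace IsProjOn

variable {X : Set H} {P : H → H}

theorem mem (hP : IsProjOn X P) (z : H) : P z ∈ X := (hP z).1

theorem inner_sub_nonpos (hP : IsProjOn X P) (z : H) {w : H} (hw : w ∈ X) :
    ⟪z - P z, w - P z⟫ ≤ 0 :=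
  (hP z).2 w hw

theorem apply_eq_self (hP : IsProjOn X P) {z : H} (hz : z ∈ X) : P z = z :=
  (sub_eq_zero.mp (real_inner_self_nonpos.mp (hP.inner_sub_nonpos z hz))).symm

theorem apply_eq_of_comp_eq_self {Y : Set H} {Q : H → H} (hP : IsProjOn X P)
    (hQ : IsProjOn Y Q) (hXY : (X ∩ Y).Nonempty) {z : H} (hz : Q (P z) = z) :
    P z = z := by
  obtain ⟨p, hpX, hpY⟩ := hXY
  have hY := hQ.inner_sub_nonpos (P z) hpY
  rw [hz] at hY
  exact (eq_of_inner_sub_nonpos_of_inner_sub_nonpos (hP.inner_sub_nonpos z hpX) hY).symm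

end IsProjOn

end

theorem fix_proj_comp_eq_inter_general
    {H : Type*} [NormedAddCommGroup H] [InnerProductSpace ℝ H]
    (X Y : Set H)
    (hXY : (X ∩ Y).Nonempty)
    (projX projY : H → H)
    (hPX : IsProjOn X projX) (hPY : IsProjOn Y projY) :
    {z : H | projY (projX z) = z} = X ∩ Y := by
  ext z
  constructor
  · intro hz
    have hfix : projX z = z := hPX.apply_eq_of_comp_eq_self hPY hXY hz
    refine ⟨hfix ▸ hPX.mem z, ?_⟩
    rw [← hz]
    exact hPY.mem _
  · rintro ⟨hzX, hzY⟩
    show projY (projX z) = z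
    rw [hPX.apply_eq_self hzX, hPY.apply_eq_self hzY]

theorem fix_proj_comp_eq_inter
    {H : Type*} [NormedAddCommGroup H] [InnerProductSpace ℝ H]
    (X Y : Set H) (hXne : X.Nonempty) (hYne : Y.Nonempty)
    (hXc : IsClosed X) (hYc : IsClosed Y)
    (hXconv : Convex ℝ X) (hYconv : Convex ℝ Y)
    (hXY : (X ∩ Y).Nonempty)
    (projX projY : H → H)
    (hPX : IsProjOn X projX) (hPY : IsProjOn Y projY) :
    {z : H | projY (projX z) = z} = X ∩ Y :=
  fix_proj_comp_eq_inter_general X Y hXY projX projY hPX hPY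
end

section
/- Let X, Y be nonempty closed convex subsets of a real Hilbert space with X ∩ Y ≠ ∅, and let θ ∈ (0,1]. Then the fixed-point set of the operator B^θ := proj_Y ∘ R_X^θ, where R_X^θ = (1−θ)Id + θ(2 proj_X − Id), equals X ∩ Y. -/
open RealInnerProductSpace

theorem fix_proj_relaxed_reflection_eq_inter
    {H : Type*} [NormedAddCommGroup H] [InnerProductSpace ℝ H]
    (X Y : Set H) (hXne : X.Nonempty) (hYne : Y.Nonempty)
    (hXc : IsClosed X) (hYc : IsClosed Y)
    (hXconv : Convex ℝ X) (hYconv : Convex ℝ Y)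
    (hXY : (X ∩ Y).Nonempty)
    (projX projY : H → H) (hPX : IsProjOn X projX) (hPY : IsProjOn Y projY)
    (θ : ℝ) (hθ : θ ∈ Set.Ioc (0:ℝ) 1)
    (RX B : H → H)
    (hRX : ∀ z, RX z = (1 - θ) • z + θ • ((2:ℝ) • projX z - z))
    (hB : ∀ z, B z = projY (RX z)) :
    {z : H | B z = z} = X ∩ Y := by
  obtain ⟨hθ0, hθ1⟩ := hθ
  ext z
  simp only [Set.mem_setOf_eq, Set.mem_inter_iff]
  constructor
  · intro hz
    rw [hB] at hz
    obtain ⟨a, haX, haY⟩ := hXY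
    have hzY : z ∈ Y := hz ▸ (hPY (RX z)).1
    have hpX : projX z ∈ X := (hPX z).1
    have h1 : ⟪z - projX z, a - projX z⟫ ≤ 0 := (hPX z).2 a haX
    have hr : RX z - z = (2 * θ) • (projX z - z) := by
      rw [hRX]; module
    have h2 : ⟪RX z - z, a - z⟫ ≤ 0 := by
      have := (hPY (RX z)).2 a haY
      rwa [hz] at this
    rw [hr, real_inner_smul_left] at h2
    have h3 : 0 ≤ ⟪z - projX z, a - z⟫ := by
      have h4 : ⟪projX z - z, a - z⟫ ≤ 0 := nonpos_of_mul_nonpos_right h2 (by linarith)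
      have : z - projX z = -(projX z - z) := by module
      rw [this, inner_neg_left]; linarith
    have h5 : ⟪z - projX z, a - projX z⟫ = ⟪z - projX z, a - z⟫ + ⟪z - projX z, z - projX z⟫ := by
      rw [← inner_add_right]; congr 1; module
    have h6 : ⟪z - projX z, z - projX z⟫ ≤ 0 := by linarith
    rw [real_inner_self_eq_norm_sq] at h6
    have hn : z - projX z = 0 := by
      have := sq_nonneg ‖z - projX z‖
      have : ‖z - projX z‖ = 0 := by nlinarith
      simpa using this
    have hzx : z = projX z := sub_eq_zero.mp hn
    exact ⟨hzx ▸ hpX, hzY⟩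
  · rintro ⟨hzX, hzY⟩
    have hpz : projX z = z := by
      have h := (hPX z).2 z hzX
      have : ‖z - projX z‖ ^ 2 ≤ 0 := by rwa [real_inner_self_eq_norm_sq] at h
      have hn : z - projX z = 0 := by
        have := sq_nonneg ‖z - projX z‖
        have : ‖z - projX z‖ = 0 := by nlinarith
        simpa using this
      have := sub_eq_zero.mp hn
      exact this.symm
    have hR : RX z = z := by rw [hRX, hpz]; module
    have hqz : projY z = z := by
      have h := (hPY z).2 z hzY
      have : ‖z - projY z‖ ^ 2 ≤ 0 := by rwa [real_inner_self_eq_norm_sq] at h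
      have hn : z - projY z = 0 := by
        have := sq_nonneg ‖z - projY z‖
        have : ‖z - projY z‖ = 0 := by nlinarith
        simpa using this
      have := sub_eq_zero.mp hn
      exact this.symm
    rw [hB, hR, hqz]
end

section
/- Let X, Y be nonempty closed convex subsets of a real Hilbert space with X ∩ Y ≠ ∅, θ, η ∈ (0,1], and γ ∈ (0,1). Define A := (1/2)(Id + R_Y^η R_X^θ) and B := proj_Y ∘ R_X^θ with relaxed reflections R_X^θ = (1−θ)Id + θ(2 proj_X − Id), R_Y^η = (1−η)Id + η(2 proj_Y − Id). Then Fix((1−γ)A + γB) = X ∩ Y. -/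
open RealInnerProductSpace

theorem fix_gcarpa_operator_eq_inter
    {H : Type*} [NormedAddCommGroup H] [InnerProductSpace ℝ H]
    (X Y : Set H) (hXne : X.Nonempty) (hYne : Y.Nonempty)
    (hXc : IsClosed X) (hYc : IsClosed Y)
    (hXconv : Convex ℝ X) (hYconv : Convex ℝ Y)
    (hXY : (X ∩ Y).Nonempty)
    (projX projY : H → H) (hPX : IsProjOn X projX) (hPY : IsProjOn Y projY)
    (θ η γ : ℝ) (hθ : θ ∈ Set.Ioc (0:ℝ) 1) (hη : η ∈ Set.Ioc (0:ℝ) 1)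
    (hγ : γ ∈ Set.Ioo (0:ℝ) 1)
    (RX RY A B : H → H)
    (hRX : ∀ z, RX z = (1 - θ) • z + θ • ((2:ℝ) • projX z - z))
    (hRY : ∀ z, RY z = (1 - η) • z + η • ((2:ℝ) • projY z - z))
    (hA : ∀ z, A z = (2:ℝ)⁻¹ • (z + RY (RX z)))
    (hB : ∀ z, B z = projY (RX z)) :
    {z : H | (1 - γ) • A z + γ • B z = z} = X ∩ Y := by
  have hfixX : ∀ z ∈ X, projX z = z := by
    intro z hz
    have h1 := (hPX z).2 z hz
    have h0 : ⟪z - projX z, z - projX z⟫ = 0 := le_antisymm h1 real_inner_self_nonneg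
    have := inner_self_eq_zero.mp h0
    have := sub_eq_zero.mp this
    exact this.symm
  have hfixY : ∀ z ∈ Y, projY z = z := by
    intro z hz
    have h1 := (hPY z).2 z hz
    have h0 : ⟪z - projY z, z - projY z⟫ = 0 := le_antisymm h1 real_inner_self_nonneg
    exact (sub_eq_zero.mp (inner_self_eq_zero.mp h0)).symm
  ext z
  simp only [Set.mem_setOf_eq, Set.mem_inter_iff]
  constructor
  · intro h
    obtain ⟨w, hwX, hwY⟩ := hXY
    have hxX : projX z ∈ X := (hPX z).1
    have hp : RX z = z + (2*θ) • (projX z - z) := by rw [hRX]; module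
    set x := projX z with hxdef
    set p := RX z with hpdef
    have hqY : projY p ∈ Y := (hPY p).1
    rw [hA, hB, ← hpdef, hRY p] at h
    set q := projY p with hqdef
    rw [hp] at h
    -- h is now a linear equation in z, x, q
    have hμ : 0 < γ + (1-γ)*η := by nlinarith [hγ.1, hγ.2, hη.1]
    have hkey : (γ + (1-γ)*η) • (q - z) = (-((1-γ)*θ*(2*η-1))) • (z - x) := by
      linear_combination (norm := module) h
    have hpq : (γ + (1-γ)*η) • (p - q) = (-(θ*(1+γ))) • (z - x) := by
      have h1 : (γ + (1-γ)*η) • (p - q)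
          = (γ + (1-γ)*η) • (p - z) - (γ + (1-γ)*η) • (q - z) := by module
      rw [h1, hp, hkey]; module
    have hwq : (γ + (1-γ)*η) • (w - q)
        = (γ + (1-γ)*η) • (w - z) + ((1-γ)*θ*(2*η-1)) • (z - x) := by
      have h1 : (γ + (1-γ)*η) • (w - q)
          = (γ + (1-γ)*η) • (w - z) - (γ + (1-γ)*η) • (q - z) := by module
      rw [h1, hkey]; module
    -- projection inequality at X
    have hi : ⟪z - x, w - z⟫ + ⟪z - x, z - x⟫ ≤ 0 := by
      have h1 := (hPX z).2 w hwX
      rw [← hxdef] at h1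
      have he : w - x = (w - z) + (z - x) := by abel
      rw [he, inner_add_right] at h1
      exact h1
    -- projection inequality at Y, scaled by μ twice
    have hii : (-(θ*(1+γ))) * ((γ + (1-γ)*η) * ⟪z - x, w - z⟫
        + ((1-γ)*θ*(2*η-1)) * ⟪z - x, z - x⟫) ≤ 0 := by
      have h2 := (hPY p).2 w hwY
      rw [← hqdef] at h2
      have h2' : ⟪(γ + (1-γ)*η) • (p - q), (γ + (1-γ)*η) • (w - q)⟫ ≤ 0 := by
        rw [real_inner_smul_left, real_inner_smul_right]
        nlinarith [mul_pos hμ hμ]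
      rw [hpq, hwq] at h2'
      rw [real_inner_smul_left, inner_add_right, real_inner_smul_right,
        real_inner_smul_right] at h2'
      linarith
    have htn := real_inner_self_nonneg (x := z - x)
    set s : ℝ := ⟪z - x, w - z⟫ with hsd
    set t : ℝ := ⟪z - x, z - x⟫ with htd
    clear_value s t
    clear_value x p q
    clear h hp hpq hwq hxdef hpdef hqdef
    have hθp := hθ.1
    have hθ1 := hθ.2
    have hη1 := hη.2
    have hηp := hη.1
    have hγp := hγ.1
    have hγ1 := hγ.2
    have hpos : 0 < θ*(1+γ) := by nlinarith
    have h3 : (γ + (1-γ)*η) * s + ((1-γ)*θ*(2*η-1)) * t ≥ 0 := by nlinarith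
    have heμ : (1-γ)*θ*(2*η-1) < γ + (1-γ)*η := by
      rcases le_or_gt (2*η-1) 0 with hc | hc
      · nlinarith [mul_nonneg (mul_nonneg (by linarith : (0:ℝ) ≤ 1-γ) hθp.le)
          (by linarith : (0:ℝ) ≤ -(2*η-1))]
      · nlinarith [mul_nonneg (by linarith : (0:ℝ) ≤ 1-γ)
          (mul_nonneg (by linarith : (0:ℝ) ≤ 1-θ) hc.le),
          mul_nonneg (by linarith : (0:ℝ) ≤ 1-γ) (by linarith : (0:ℝ) ≤ 1-η)]
    have ht' : t ≤ 0 := by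
      nlinarith [mul_le_mul_of_nonneg_left hi (le_of_lt hμ), sub_pos.mpr heμ]
    have ht : ⟪z - x, z - x⟫ = (0:ℝ) := by rw [← htd]; exact le_antisymm ht' htn
    have hzx : z = x := sub_eq_zero.mp (inner_self_eq_zero.mp ht)
    constructor
    · rw [hzx]; exact hxX
    · have hq0 : (γ + (1-γ)*η) • (q - z) = 0 := by
        rw [hkey, ← hzx]; simp
      have : q - z = 0 := by
        rcases smul_eq_zero.mp hq0 with h' | h'
        · exact absurd h' (ne_of_gt hμ)
        · exact h'
      have hqz : q = z := sub_eq_zero.mp this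
      rw [← hqz]; exact hqY
  · rintro ⟨hzX, hzY⟩
    have h1 : RX z = z := by rw [hRX, hfixX z hzX]; module
    have h2 : RY (RX z) = z := by rw [h1, hRY, hfixY z hzY]; module
    rw [hA, hB, h2, h1, hfixY z hzY]
    module
end

section
/- Let X, Y be nonempty closed convex subsets of a finite-dimensional real Hilbert space with X ∩ Y ≠ ∅. Fix γ ∈ (0,1), θ, η ∈ (0,1], and μ ∈ (0, 2/(1+γ)). Define A := (1/2)(Id + R_Y^η R_X^θ), B := proj_Y R_X^θ, F := (1−γ)A + γB, and T := (1−μ)Id + μF. Then the iterates z^{k+1} = T z^k converge to some z* ∈ X ∩ Y. -/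
open RealInnerProductSpace Filter

section Aux
variable {H : Type*} [NormedAddCommGroup H] [InnerProductSpace ℝ H]

lemma aux_comb3 (a b f : ℝ) (h : a + b + f = 1) (u v s : H) :
    ‖a • u + b • v + f • s‖ ^ 2 =
      a * ‖u‖ ^ 2 + b * ‖v‖ ^ 2 + f * ‖s‖ ^ 2
        - a * b * ‖u - v‖ ^ 2 - a * f * ‖u - s‖ ^ 2 - b * f * ‖v - s‖ ^ 2 := by
  obtain rfl : a = 1 - b - f := by linarith
  simp only [← real_inner_self_eq_norm_sq]
  simp only [inner_add_left, inner_add_right, inner_sub_left, inner_sub_right,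
    real_inner_smul_left, real_inner_smul_right]
  rw [real_inner_comm v u, real_inner_comm s u, real_inner_comm s v]
  ring

lemma aux_proj_fix {X : Set H} {P : H → H} (hP : IsProjOn X P) {p : H} (hp : p ∈ X) :
    P p = p := by
  have h2 := (hP p).2 p hp
  have hsq : ‖p - P p‖ ^ 2 ≤ 0 := by rwa [← real_inner_self_eq_norm_sq]
  have hz : p - P p = 0 := by
    have hn := norm_nonneg (p - P p)
    have h3 : ‖p - P p‖ = 0 := by nlinarith
    simpa using h3
  linear_combination (norm := module) -hz

lemma aux_refl_ne {X : Set H} {P : H → H} (hP : IsProjOn X P) (u v : H) :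
    ‖((2:ℝ) • P u - u) - ((2:ℝ) • P v - v)‖ ≤ ‖u - v‖ := by
  have h1 := (hP u).2 (P v) (hP v).1
  have h2 := (hP v).2 (P u) (hP u).1
  have key : ⟪P u - P v, P u - P v⟫ ≤ ⟪u - v, P u - P v⟫ := by
    have e1 : -⟪u - P u, P v - P u⟫ = ⟪u - P u, P u - P v⟫ := by
      rw [← inner_neg_right]; congr 1; abel
    have expand : ⟪u - v, P u - P v⟫ - ⟪P u - P v, P u - P v⟫
        = ⟪u - P u, P u - P v⟫ - ⟪v - P v, P u - P v⟫ := by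
      rw [← inner_sub_left, ← inner_sub_left]; congr 1; abel
    linarith [expand, e1, h1, h2]
  have hsq : ‖((2:ℝ) • P u - u) - ((2:ℝ) • P v - v)‖ ^ 2 ≤ ‖u - v‖ ^ 2 := by
    have e : ((2:ℝ) • P u - u) - ((2:ℝ) • P v - v)
        = (2:ℝ) • (P u - P v) - (u - v) := by module
    rw [e, ← real_inner_self_eq_norm_sq, ← real_inner_self_eq_norm_sq]
    generalize hd : P u - P v = d at key ⊢
    generalize hw : u - v = w at key ⊢
    have hc : ⟪d, w⟫ = ⟪w, d⟫ := real_inner_comm _ _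
    simp only [inner_sub_left, inner_sub_right, real_inner_smul_left, real_inner_smul_right]
    nlinarith [key, hc]
  nlinarith [norm_nonneg (((2:ℝ) • P u - u) - ((2:ℝ) • P v - v)), norm_nonneg (u - v)]

end Aux

set_option maxHeartbeats 1000000 in
theorem gcarpa_converges_finite_dim
    {H : Type*} [NormedAddCommGroup H] [InnerProductSpace ℝ H]
    [FiniteDimensional ℝ H]
    (X Y : Set H) (hXne : X.Nonempty) (hYne : Y.Nonempty)
    (hXc : IsClosed X) (hYc : IsClosed Y)
    (hXconv : Convex ℝ X) (hYconv : Convex ℝ Y)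
    (hXY : (X ∩ Y).Nonempty)
    (projX projY : H → H) (hPX : IsProjOn X projX) (hPY : IsProjOn Y projY)
    (γ θ η μ : ℝ) (hγ : γ ∈ Set.Ioo (0:ℝ) 1)
    (hθ : θ ∈ Set.Ioc (0:ℝ) 1) (hη : η ∈ Set.Ioc (0:ℝ) 1)
    (hμ : μ ∈ Set.Ioo (0:ℝ) (2 / (1 + γ)))
    (RX RY A B F T : H → H)
    (hRX : ∀ z, RX z = (1 - θ) • z + θ • ((2:ℝ) • projX z - z))
    (hRY : ∀ z, RY z = (1 - η) • z + η • ((2:ℝ) • projY z - z))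
    (hA : ∀ z, A z = (2:ℝ)⁻¹ • (z + RY (RX z)))
    (hB : ∀ z, B z = projY (RX z))
    (hF : ∀ z, F z = (1 - γ) • A z + γ • B z)
    (hT : ∀ z, T z = (1 - μ) • z + μ • F z)
    (z : ℕ → H) (hz : ∀ k, z (k + 1) = T (z k)) :
    ∃ zstar ∈ X ∩ Y, Filter.Tendsto z Filter.atTop (nhds zstar) := by
  obtain ⟨hγ0, hγ1⟩ := hγ
  obtain ⟨hθ0, hθ1⟩ := hθ
  obtain ⟨hη0, hη1⟩ := hη
  obtain ⟨hμ0, hμ2⟩ := hμ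
  have hμγ : μ * (1 + γ) < 2 := by
    rw [lt_div_iff₀ (by linarith)] at hμ2; linarith
  set b : ℝ := μ * θ * (1 - η * (1 - γ)) / 2 with hbdef
  set f : ℝ := μ * (η + γ * (1 - η)) / 2 with hfdef
  set a : ℝ := 1 - b - f with hadef
  have habf : a + b + f = 1 := by rw [hadef]; ring
  have hb : 0 < b := by
    rw [hbdef]
    have h1 : η * (1 - γ) < 1 := by nlinarith
    have := mul_pos (mul_pos hμ0 hθ0) (by linarith : (0:ℝ) < 1 - η * (1 - γ))
    linarith
  have hf : 0 < f := by
    rw [hfdef]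
    have h1 : 0 < η + γ * (1 - η) := by nlinarith
    have := mul_pos hμ0 h1
    linarith
  have ha : 0 < a := by
    rw [hadef, hbdef, hfdef]
    have h1 : θ * (1 - η * (1 - γ)) ≤ 1 - η * (1 - γ) := by
      nlinarith [mul_nonneg (by linarith : (0:ℝ) ≤ 1 - θ)
        (by nlinarith : (0:ℝ) ≤ 1 - η * (1 - γ))]
    have h2 := mul_le_mul_of_nonneg_left h1 hμ0.le
    nlinarith [h2, hμγ]
  set Gx : H → H := fun x => (2:ℝ) • projX x - x with hGxdef
  set Sx : H → H := fun x => (2:ℝ) • projY (RX x) - RX x with hSxdef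
  -- representation of T
  have hrep : ∀ x, T x = a • x + b • Gx x + f • Sx x := by
    intro x
    simp only [hGxdef, hSxdef, hT, hF, hA, hB, hRY, hRX, hadef, hbdef, hfdef]
    module
  -- nonexpansiveness
  have hGne : ∀ u v, ‖Gx u - Gx v‖ ≤ ‖u - v‖ := by
    intro u v; simpa only [hGxdef] using aux_refl_ne hPX u v
  have hRXne : ∀ u v, ‖RX u - RX v‖ ≤ ‖u - v‖ := by
    intro u v
    have e : RX u - RX v = (1 - θ) • (u - v) + θ • (Gx u - Gx v) := by
      simp only [hRX, hGxdef]; module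
    rw [e]
    calc ‖(1 - θ) • (u - v) + θ • (Gx u - Gx v)‖
        ≤ ‖(1 - θ) • (u - v)‖ + ‖θ • (Gx u - Gx v)‖ := norm_add_le _ _
      _ = (1 - θ) * ‖u - v‖ + θ * ‖Gx u - Gx v‖ := by
          rw [norm_smul, norm_smul, Real.norm_eq_abs, Real.norm_eq_abs,
            abs_of_nonneg (by linarith), abs_of_nonneg (by linarith)]
      _ ≤ (1 - θ) * ‖u - v‖ + θ * ‖u - v‖ := by
          have := hGne u v; nlinarith
      _ = ‖u - v‖ := by ring
  have hSne : ∀ u v, ‖Sx u - Sx v‖ ≤ ‖u - v‖ := by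
    intro u v
    calc ‖Sx u - Sx v‖ ≤ ‖RX u - RX v‖ := by
          simpa only [hSxdef] using aux_refl_ne hPY (RX u) (RX v)
      _ ≤ ‖u - v‖ := hRXne u v
  -- fixed points
  have hfixes : ∀ p, p ∈ X ∩ Y → Gx p = p ∧ Sx p = p := by
    intro p hp
    have hpx : projX p = p := aux_proj_fix hPX hp.1
    have hG : Gx p = p := by rw [hGxdef]; simp only; rw [hpx]; module
    have hRXp : RX p = p := by rw [hRX, hpx]; module
    have hS : Sx p = p := by
      rw [hSxdef]; simp only; rw [hRXp, aux_proj_fix hPY hp.2]; module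
    exact ⟨hG, hS⟩
  -- decrease inequality
  have hdec : ∀ p, Gx p = p → Sx p = p → ∀ x,
      ‖T x - p‖ ^ 2 ≤ ‖x - p‖ ^ 2 - a * b * ‖x - Gx x‖ ^ 2 - a * f * ‖x - Sx x‖ ^ 2 := by
    intro p hGp hSp x
    have e : T x - p = a • (x - p) + b • (Gx x - p) + f • (Sx x - p) := by
      rw [hrep x]
      match_scalars <;> linear_combination habf
    rw [e, aux_comb3 a b f habf]
    have e1 : (x - p) - (Gx x - p) = x - Gx x := by abel
    have e2 : (x - p) - (Sx x - p) = x - Sx x := by abel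
    have e3 : (Gx x - p) - (Sx x - p) = Gx x - Sx x := by abel
    rw [e1, e2, e3]
    have g1 : ‖Gx x - p‖ ≤ ‖x - p‖ := by
      calc ‖Gx x - p‖ = ‖Gx x - Gx p‖ := by rw [hGp]
        _ ≤ ‖x - p‖ := hGne x p
    have g2 : ‖Sx x - p‖ ≤ ‖x - p‖ := by
      calc ‖Sx x - p‖ = ‖Sx x - Sx p‖ := by rw [hSp]
        _ ≤ ‖x - p‖ := hSne x p
    have g1' : ‖Gx x - p‖ ^ 2 ≤ ‖x - p‖ ^ 2 := by nlinarith [norm_nonneg (Gx x - p)]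
    have g2' : ‖Sx x - p‖ ^ 2 ≤ ‖x - p‖ ^ 2 := by nlinarith [norm_nonneg (Sx x - p)]
    have hs : a * ‖x - p‖ ^ 2 + b * ‖x - p‖ ^ 2 + f * ‖x - p‖ ^ 2 = ‖x - p‖ ^ 2 := by
      rw [← add_mul, ← add_mul, habf, one_mul]
    linarith [mul_le_mul_of_nonneg_left g1' hb.le, mul_le_mul_of_nonneg_left g2' hf.le,
      mul_nonneg (mul_nonneg hb.le hf.le) (sq_nonneg ‖Gx x - Sx x‖), hs]
  -- iterate decrease
  have hdecz : ∀ p, Gx p = p → Sx p = p → ∀ k,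
      ‖z (k+1) - p‖ ^ 2 ≤ ‖z k - p‖ ^ 2 - a * b * ‖z k - Gx (z k)‖ ^ 2
        - a * f * ‖z k - Sx (z k)‖ ^ 2 := by
    intro p hGp hSp k
    rw [hz k]; exact hdec p hGp hSp (z k)
  obtain ⟨p0, hp0⟩ := hXY
  obtain ⟨hGp0, hSp0⟩ := hfixes p0 hp0
  set D : ℕ → ℝ := fun k => ‖z k - p0‖ ^ 2 with hDdef
  have hDstep : ∀ k, D (k+1) ≤ D k - a * b * ‖z k - Gx (z k)‖ ^ 2
      - a * f * ‖z k - Sx (z k)‖ ^ 2 := fun k => hdecz p0 hGp0 hSp0 k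
  have hDanti : Antitone D := antitone_nat_of_succ_le (by
    intro k
    have := hDstep k
    nlinarith [mul_nonneg (mul_nonneg ha.le hb.le) (sq_nonneg ‖z k - Gx (z k)‖),
      mul_nonneg (mul_nonneg ha.le hf.le) (sq_nonneg ‖z k - Sx (z k)‖)])
  have hDbdd : BddBelow (Set.range D) := by
    refine ⟨0, ?_⟩
    rintro x ⟨k, rfl⟩
    exact sq_nonneg _
  have hDt : Tendsto D atTop (nhds (⨅ k, D k)) := tendsto_atTop_ciInf hDanti hDbdd
  have hDshift : Tendsto (fun k => D (k+1)) atTop (nhds (⨅ k, D k)) :=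
    hDt.comp (tendsto_add_atTop_nat 1)
  have hdiff : Tendsto (fun k => D k - D (k+1)) atTop (nhds 0) := by
    simpa using hDt.sub hDshift
  have key0 : ∀ (c : ℝ), 0 < c →
      (∀ k, c * ‖z k - Gx (z k)‖ ^ 2 ≤ D k - D (k+1) ∨ True) → True := fun _ _ _ => trivial
  have hG0sq : Tendsto (fun k => ‖z k - Gx (z k)‖ ^ 2) atTop (nhds 0) := by
    have hub : ∀ k, ‖z k - Gx (z k)‖ ^ 2 ≤ (D k - D (k+1)) / (a * b) := by
      intro k
      rw [le_div_iff₀ (mul_pos ha hb)]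
      have := hDstep k
      nlinarith [mul_nonneg (mul_nonneg ha.le hf.le) (sq_nonneg ‖z k - Sx (z k)‖)]
    have hlim : Tendsto (fun k => (D k - D (k+1)) / (a * b)) atTop (nhds 0) := by
      simpa using hdiff.div_const (a * b)
    exact tendsto_of_tendsto_of_tendsto_of_le_of_le tendsto_const_nhds hlim
      (fun k => sq_nonneg _) hub
  have hS0sq : Tendsto (fun k => ‖z k - Sx (z k)‖ ^ 2) atTop (nhds 0) := by
    have hub : ∀ k, ‖z k - Sx (z k)‖ ^ 2 ≤ (D k - D (k+1)) / (a * f) := by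
      intro k
      rw [le_div_iff₀ (mul_pos ha hf)]
      have := hDstep k
      nlinarith [mul_nonneg (mul_nonneg ha.le hb.le) (sq_nonneg ‖z k - Gx (z k)‖)]
    have hlim : Tendsto (fun k => (D k - D (k+1)) / (a * f)) atTop (nhds 0) := by
      simpa using hdiff.div_const (a * f)
    exact tendsto_of_tendsto_of_tendsto_of_le_of_le tendsto_const_nhds hlim
      (fun k => sq_nonneg _) hub
  have sq_to_norm : ∀ (v : ℕ → H), Tendsto (fun k => ‖v k‖ ^ 2) atTop (nhds 0) →
      Tendsto (fun k => v k) atTop (nhds 0) := by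
    intro v hv
    rw [tendsto_zero_iff_norm_tendsto_zero]
    have := (Real.continuous_sqrt.tendsto 0).comp hv
    simpa [Function.comp_def, Real.sqrt_sq (norm_nonneg _)] using this
  have hG0 : Tendsto (fun k => z k - Gx (z k)) atTop (nhds 0) := sq_to_norm _ hG0sq
  have hS0 : Tendsto (fun k => z k - Sx (z k)) atTop (nhds 0) := sq_to_norm _ hS0sq
  -- bounded, extract convergent subsequence
  have hball : ∀ k, z k ∈ Metric.closedBall p0 ‖z 0 - p0‖ := by
    intro k
    rw [Metric.mem_closedBall, dist_eq_norm]
    have h1 : D k ≤ D 0 := hDanti (Nat.zero_le k)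
    simp only [hDdef] at h1
    nlinarith [norm_nonneg (z k - p0), norm_nonneg (z 0 - p0)]
  obtain ⟨w, hwball, φ, hφ, hzφ⟩ :=
    (isCompact_closedBall p0 ‖z 0 - p0‖).tendsto_subseq hball
  -- the limit point is fixed by Gx and Sx
  have hGxLip : LipschitzWith 1 Gx := LipschitzWith.of_dist_le_mul (by
    intro u v; rw [dist_eq_norm, dist_eq_norm]; simpa using hGne u v)
  have hSxLip : LipschitzWith 1 Sx := LipschitzWith.of_dist_le_mul (by
    intro u v; rw [dist_eq_norm, dist_eq_norm]; simpa using hSne u v)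
  have hGfixw : Gx w = w := by
    have h1 : Tendsto (fun j => Gx (z (φ j))) atTop (nhds (Gx w)) :=
      (hGxLip.continuous.tendsto w).comp hzφ
    have h2 : Tendsto (fun j => z (φ j) - Gx (z (φ j))) atTop (nhds 0) :=
      hG0.comp hφ.tendsto_atTop
    have h3 : Tendsto (fun j => Gx (z (φ j))) atTop (nhds w) := by
      have := Tendsto.sub (hzφ : Tendsto (fun j => z (φ j)) atTop (nhds w)) h2
      simpa using this
    exact tendsto_nhds_unique h1 h3
  have hSfixw : Sx w = w := by
    have h1 : Tendsto (fun j => Sx (z (φ j))) atTop (nhds (Sx w)) :=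
      (hSxLip.continuous.tendsto w).comp hzφ
    have h2 : Tendsto (fun j => z (φ j) - Sx (z (φ j))) atTop (nhds 0) :=
      hS0.comp hφ.tendsto_atTop
    have h3 : Tendsto (fun j => Sx (z (φ j))) atTop (nhds w) := by
      have := Tendsto.sub (hzφ : Tendsto (fun j => z (φ j)) atTop (nhds w)) h2
      simpa using this
    exact tendsto_nhds_unique h1 h3
  -- w ∈ X ∩ Y
  have hprojXw : projX w = w := by
    have h2 : (2:ℝ) • projX w = (2:ℝ) • w := by
      have := hGfixw
      simp only [hGxdef] at this
      linear_combination (norm := module) this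
    exact smul_right_injective H (two_ne_zero) h2
  have hwX : w ∈ X := hprojXw ▸ (hPX w).1
  have hRXw : RX w = w := by rw [hRX, hprojXw]; module
  have hprojYw : projY w = w := by
    have h2 : (2:ℝ) • projY w = (2:ℝ) • w := by
      have h := hSfixw
      simp only [hSxdef, hRXw] at h
      linear_combination (norm := module) h
    exact smul_right_injective H (two_ne_zero) h2
  have hwY : w ∈ Y := hprojYw ▸ (hPY w).1
  -- Fejér convergence to w
  refine ⟨w, ⟨hwX, hwY⟩, ?_⟩
  set E : ℕ → ℝ := fun k => ‖z k - w‖ with hEdef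
  have hEanti : Antitone E := antitone_nat_of_succ_le (by
    intro k
    have h := hdecz w hGfixw hSfixw k
    have h1 : ‖z (k+1) - w‖ ^ 2 ≤ ‖z k - w‖ ^ 2 := by
      nlinarith [mul_nonneg (mul_nonneg ha.le hb.le) (sq_nonneg ‖z k - Gx (z k)‖),
        mul_nonneg (mul_nonneg ha.le hf.le) (sq_nonneg ‖z k - Sx (z k)‖)]
    have := norm_nonneg (z (k+1) - w)
    have := norm_nonneg (z k - w)
    simp only [hEdef]
    nlinarith)
  have hEbdd : BddBelow (Set.range E) := by
    refine ⟨0, ?_⟩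
    rintro x ⟨k, rfl⟩
    exact norm_nonneg _
  have hEt : Tendsto E atTop (nhds (⨅ k, E k)) := tendsto_atTop_ciInf hEanti hEbdd
  have hEφ : Tendsto (fun j => E (φ j)) atTop (nhds 0) := by
    have := tendsto_iff_norm_sub_tendsto_zero.mp hzφ
    simpa [hEdef, Function.comp_def] using this
  have hEφ' : Tendsto (fun j => E (φ j)) atTop (nhds (⨅ k, E k)) :=
    hEt.comp hφ.tendsto_atTop
  have hinf : (⨅ k, E k) = 0 := tendsto_nhds_unique hEφ' hEφ
  have hE0 : Tendsto E atTop (nhds 0) := hinf ▸ hEt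
  exact tendsto_iff_norm_sub_tendsto_zero.mpr hE0
end
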